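/- Let j be a gauge function as above on ℝ^{2n}, let φ : ℝ → ℝ be a C^∞ function with φ(t) ≥ 0 for t ≥ 0, φ(0) = φ'(0) = 0, φ''(0) = 1, φ'(t) > 0 for t > 0, t ↦ φ'(t)/t strictly decreasing on (0,∞) and φ'(t)/t → 1 as t → 0⁺; let a, T > 0 and define H_a(x) = a·φ(j(x)) (with H_a(0) = 0). Then: (i) if (τ, y) is a closed characteristic (ẏ = J·∇j(y), j(y(t)) = 1, y τ-periodic) and ρ > 0 satisfies a·φ'(ρ) = ρ·τ/T, then x(t) := ρ·y(τ·t/T) is a T-periodic solution of ẋ(t) = J·∇H_a(x(t)); (ii) conversely, every nonconstant T-periodic solution x of ẋ = J·∇H_a(x) arises this way: there exist τ ∈ (0, a·T), ρ > 0 with a·φ'(ρ) = ρ·τ/T, and a closed characteristic (τ, y) such that x(t) = ρ·y(τ·t/T) for all t. -/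

import Mathlib

/-!
Along a solution of `ẋ = J∇H_a(x)` the energy `H_a = a·φ∘j` is conserved, since
`⟪∇H, J∇H⟫ = 0`; as `φ` is strictly increasing on `[0, ∞)`, `j ∘ x` is a constant `ρ`, positive
when `x` is not identically `0`. On the level set `j = ρ` one has `∇H_a = a·φ'(ρ)·∇j`, and `∇j`
is invariant under positive scaling, so `y(s) = ρ⁻¹·x(T·s/τ)` with `τ = a·φ'(ρ)·T/ρ` solves
`ẏ = J∇j(y)` on `j = 1`; the converse is the same computation read backwards. Finally
`φ'(ρ)/ρ < lim_{t→0⁺} φ'(t)/t = 1` gives `τ < a·T`. Conservation of energy needs `H_a`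
differentiable at `0` as well, where `φ(s) = o(s)` and `j(z) = O(‖z‖)`.
-/

/-- The standard symplectic matrix `J = [[0, -I_n],[I_n, 0]]` acting on `ℝ^{2n}`. -/
noncomputable def Jmap (n : ℕ) (x : EuclideanSpace ℝ (Fin (2 * n))) :
    EuclideanSpace ℝ (Fin (2 * n)) :=
  WithLp.toLp 2 fun (i : Fin (2 * n)) => if h : (i : ℕ) < n then -x ⟨(i : ℕ) + n, by omega⟩
           else x ⟨(i : ℕ) - n, by have := i.isLt; omega⟩

/-- `j` is the gauge function of a `C³` compact hypersurface in `ℝ^{2n}` strictly star-shaped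
with respect to the origin: positively homogeneous of degree 1, positive away from `0`,
vanishing at `0`, and `C³` on `ℝ^{2n} ∖ {0}`. -/
def IsGauge (n : ℕ) (j : EuclideanSpace ℝ (Fin (2 * n)) → ℝ) : Prop :=
  (∀ t : ℝ, 0 < t → ∀ x, j (t • x) = t * j x) ∧
  (∀ x, x ≠ 0 → 0 < j x) ∧
  j 0 = 0 ∧
  ContDiffOn ℝ 3 j {(0 : EuclideanSpace ℝ (Fin (2 * n)))}ᶜ

/-- `(τ, y)` is a closed characteristic on `Σ = j⁻¹(1)`:
`τ > 0`, `ẏ(t) = J·∇j(y(t))`, `j(y(t)) = 1` and `y(t + τ) = y(t)` for all `t`. -/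
def IsClosedCharacteristic (n : ℕ) (j : EuclideanSpace ℝ (Fin (2 * n)) → ℝ)
    (τ : ℝ) (y : ℝ → EuclideanSpace ℝ (Fin (2 * n))) : Prop :=
  0 < τ ∧
  (∀ t : ℝ, HasDerivAt y (Jmap n (gradient j (y t))) t) ∧
  (∀ t : ℝ, j (y t) = 1) ∧
  (∀ t : ℝ, y (t + τ) = y t)

open Filter Topology Asymptotics InnerProductSpace

section Homogeneous

variable {E : Type*} [NormedAddCommGroup E] [NormedSpace ℝ E] {j : E → ℝ}

theorem fderiv_smul_eq_of_homogeneous (hhom : ∀ t : ℝ, 0 < t → ∀ x, j (t • x) = t * j x)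
    {t : ℝ} (ht : 0 < t) {x : E} (hjtx : DifferentiableAt ℝ j (t • x))
    (hjx : DifferentiableAt ℝ j x) : fderiv ℝ j (t • x) = fderiv ℝ j x := by
  have hcomp : HasFDerivAt (fun z => j (t • z))
      ((fderiv ℝ j (t • x)).comp (t • ContinuousLinearMap.id ℝ E)) x :=
    hjtx.hasFDerivAt.comp x ((hasFDerivAt_id x).const_smul t)
  have hmul : HasFDerivAt (fun z => j (t • z)) (t • fderiv ℝ j x) x := by
    simpa only [hhom t ht] using hjx.hasFDerivAt.const_mul t
  ext v
  have hv := congr($(hcomp.unique hmul) v)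
  simp only [ContinuousLinearMap.comp_smulₛₗ, Real.ringHom_apply, ContinuousLinearMap.comp_id,
    smul_apply, smul_eq_mul] at hv
  exact mul_left_cancel₀ ht.ne' hv

theorem gradient_smul_eq_of_homogeneous {F : Type*} [NormedAddCommGroup F]
    [InnerProductSpace ℝ F] [CompleteSpace F] {j : F → ℝ}
    (hhom : ∀ t : ℝ, 0 < t → ∀ x, j (t • x) = t * j x)
    {t : ℝ} (ht : 0 < t) {x : F} (hjtx : DifferentiableAt ℝ j (t • x))
    (hjx : DifferentiableAt ℝ j x) : gradient j (t • x) = gradient j x := by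
  rw [gradient, gradient, fderiv_smul_eq_of_homogeneous hhom ht hjtx hjx]

theorem isBigO_norm_of_homogeneous [ProperSpace E]
    (hhom : ∀ t : ℝ, 0 < t → ∀ x, j (t • x) = t * j x)
    (hcont : ContinuousOn j (Metric.sphere 0 1)) : j =O[𝓝 0] (‖·‖) := by
  obtain ⟨C, hC⟩ := (isCompact_sphere (0 : E) 1).exists_bound_of_continuousOn hcont
  refine IsBigO.of_bound C (Eventually.of_forall fun z => ?_)
  rcases eq_or_ne z 0 with rfl | hz
  · have h0 : j 0 = 2 * j 0 := by simpa using hhom 2 two_pos 0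
    simp [show j 0 = 0 by linarith]
  · have hnz : 0 < ‖z‖ := norm_pos_iff.mpr hz
    have hunit : ‖z‖⁻¹ • z ∈ Metric.sphere (0 : E) 1 := by
      simp [norm_smul, hnz.ne']
    rw [norm_norm]
    calc ‖j z‖ = ‖z‖ * ‖j (‖z‖⁻¹ • z)‖ := by
          rw [hhom _ (inv_pos.mpr hnz), norm_mul, Real.norm_of_nonneg (inv_nonneg.mpr hnz.le),
            mul_inv_cancel_left₀ hnz.ne']
      _ ≤ ‖z‖ * C := mul_le_mul_of_nonneg_left (hC _ hunit) hnz.le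
      _ = C * ‖z‖ := mul_comm _ _

end Homogeneous

theorem HasDerivAt.comp_of_isBigO_norm {E : Type*} [NormedAddCommGroup E] [NormedSpace ℝ E]
    {f : ℝ → ℝ} {g : E → ℝ} (hf : HasDerivAt f 0 0) (hf0 : f 0 = 0) (hg0 : g 0 = 0)
    (hg : g =O[𝓝 0] (‖·‖)) : HasFDerivAt (f ∘ g) (0 : E →L[ℝ] ℝ) 0 := by
  have hf_o : f =o[𝓝 0] fun h => h := by
    simpa [hf0] using hasDerivAt_iff_isLittleO_nhds_zero.mp hf
  have hg_lim : Tendsto g (𝓝 0) (𝓝 0) := by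
    simpa [hg0] using hg.trans_tendsto (continuous_norm.tendsto' (0 : E) 0 norm_zero)
  rw [hasFDerivAt_iff_isLittleO_nhds_zero, ← isLittleO_norm_right]
  simpa [hg0, hf0, Function.comp_def] using (hf_o.comp_tendsto hg_lim).trans_isBigO hg

theorem HasDerivAt.const_smul_comp_mul_div {E : Type*} [NormedAddCommGroup E] [NormedSpace ℝ E]
    {y : ℝ → E} {y' : E} {c k m t : ℝ} (hy : HasDerivAt y y' (k * t / m)) :
    HasDerivAt (fun s => c • y (k * s / m)) ((c * k / m) • y') t := by
  have hs : HasDerivAt (fun s => k * s / m) (k / m) t := by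
    simpa using ((hasDerivAt_id t).const_mul k).div_const m
  have hcomp := (hy.scomp t hs).const_smul c
  rwa [smul_smul, ← mul_div_assoc] at hcomp

theorem deriv_lt_self_of_strictAntiOn_div {φ : ℝ → ℝ}
    (hφanti : StrictAntiOn (fun t => deriv φ t / t) (Set.Ioi 0))
    (hφlim : Tendsto (fun t => deriv φ t / t) (𝓝[>] 0) (𝓝 1))
    {ρ : ℝ} (hρ : 0 < ρ) : deriv φ ρ < ρ := by
  have hhalf : deriv φ ρ / ρ < deriv φ (ρ / 2) / (ρ / 2) :=
    hφanti (half_pos hρ) hρ (half_lt_self hρ)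
  have hle : deriv φ (ρ / 2) / (ρ / 2) ≤ 1 := by
    refine ge_of_tendsto hφlim ?_
    filter_upwards [Ioo_mem_nhdsGT (half_pos hρ)] with u hu
    exact (hφanti hu.1 (half_pos hρ) hu.2).le
  rw [← div_lt_one hρ]
  exact hhalf.trans_le hle

theorem Jmap_smul (n : ℕ) (c : ℝ) (x : EuclideanSpace ℝ (Fin (2 * n))) :
    Jmap n (c • x) = c • Jmap n x := by
  ext i
  simp only [Jmap, PiLp.smul_apply, PiLp.toLp_apply, smul_eq_mul]
  split <;> ring

theorem inner_Jmap_self (n : ℕ) (v : EuclideanSpace ℝ (Fin (2 * n))) :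
    inner ℝ v (Jmap n v) = 0 := by
  rw [PiLp.inner_apply, ← Fin.sum_congr' _ (two_mul n).symm, Fin.sum_univ_add,
    ← Finset.sum_add_distrib]
  refine Finset.sum_eq_zero fun i _ => ?_
  simp only [Jmap, Fin.val_cast, Fin.val_castAdd, Fin.is_lt, ↓reduceDIte, RCLike.inner_apply,
    Real.ringHom_apply, neg_mul, Fin.natAdd_eq_addNat, Fin.val_addNat, add_lt_iff_neg_right,
    not_lt_zero, add_tsub_cancel_right]
  exact neg_add_eq_zero.mpr (mul_comm _ _)

def IsHamiltonianTrajectory (n : ℕ) (H : EuclideanSpace ℝ (Fin (2 * n)) → ℝ)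
    (x : ℝ → EuclideanSpace ℝ (Fin (2 * n))) : Prop :=
  ∀ t, HasDerivAt x (Jmap n (gradient H (x t))) t

theorem IsHamiltonianTrajectory.hamiltonian_eq {n : ℕ} {H : EuclideanSpace ℝ (Fin (2 * n)) → ℝ}
    {x : ℝ → EuclideanSpace ℝ (Fin (2 * n))} (hx : IsHamiltonianTrajectory n H x)
    (hH : Differentiable ℝ H) (s t : ℝ) : H (x s) = H (x t) := by
  have hderiv : ∀ u, HasDerivAt (H ∘ x) 0 u := fun u => by
    have hcomp := (hH (x u)).hasGradientAt.hasFDerivAt.comp_hasDerivAt u (hx u)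
    rwa [toDual_apply_apply, inner_Jmap_self] at hcomp
  exact is_const_of_deriv_eq_zero (fun u => (hderiv u).differentiableAt)
    (fun u => (hderiv u).deriv) s t

namespace IsGauge

variable {n : ℕ} {j : EuclideanSpace ℝ (Fin (2 * n)) → ℝ} (hj : IsGauge n j)
include hj

theorem nonneg (x : EuclideanSpace ℝ (Fin (2 * n))) : 0 ≤ j x := by
  rcases eq_or_ne x 0 with rfl | hx
  · exact hj.2.2.1.ge
  · exact (hj.2.1 x hx).le

theorem ne_zero_of_pos {x : EuclideanSpace ℝ (Fin (2 * n))} (hx : 0 < j x) : x ≠ 0 := by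
  rintro rfl
  exact hx.ne' hj.2.2.1

theorem differentiableAt {x : EuclideanSpace ℝ (Fin (2 * n))} (hx : x ≠ 0) :
    DifferentiableAt ℝ j x :=
  (hj.2.2.2.contDiffAt (isOpen_compl_singleton.mem_nhds hx)).differentiableAt (by norm_num)

theorem gradient_smul {t : ℝ} (ht : 0 < t) {x : EuclideanSpace ℝ (Fin (2 * n))} (hx : x ≠ 0) :
    gradient j (t • x) = gradient j x :=
  gradient_smul_eq_of_homogeneous hj.1 ht (hj.differentiableAt (smul_ne_zero ht.ne' hx))
    (hj.differentiableAt hx)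

theorem isBigO_norm : j =O[𝓝 0] (‖·‖) :=
  isBigO_norm_of_homogeneous hj.1 (hj.2.2.2.continuousOn.mono fun z hz =>
    ne_zero_of_mem_sphere one_ne_zero ⟨z, hz⟩)

theorem hasGradientAt_comp {φ : ℝ → ℝ} (hφ : Differentiable ℝ φ) (a : ℝ)
    {x : EuclideanSpace ℝ (Fin (2 * n))} (hx : x ≠ 0) :
    HasGradientAt (fun z => a * φ (j z)) ((a * deriv φ (j x)) • gradient j x) x := by
  have hcomp := ((hφ (j x)).hasDerivAt.comp_hasFDerivAt x
    (hj.differentiableAt hx).hasFDerivAt).const_mul a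
  rwa [hasGradientAt_iff_hasFDerivAt, map_smul, toDual_gradient, mul_smul]

theorem gradient_comp_of_eq {φ : ℝ → ℝ} (hφ : Differentiable ℝ φ) (a : ℝ) {r : ℝ} (hr : 0 < r)
    {x : EuclideanSpace ℝ (Fin (2 * n))} (hx : j x = r) :
    gradient (fun z => a * φ (j z)) x = (a * deriv φ r) • gradient j x := by
  rw [(hj.hasGradientAt_comp hφ a (hj.ne_zero_of_pos (hx ▸ hr))).gradient, hx]

theorem differentiable_comp {φ : ℝ → ℝ} (hφ : Differentiable ℝ φ) (hφ0 : φ 0 = 0)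
    (hφ'0 : deriv φ 0 = 0) (a : ℝ) : Differentiable ℝ (fun z => a * φ (j z)) := by
  intro x
  rcases eq_or_ne x 0 with rfl | hx
  · refine (HasDerivAt.comp_of_isBigO_norm ?_ hφ0 hj.2.2.1 ?_).differentiableAt.const_mul a
    · simpa [hφ'0] using (hφ 0).hasDerivAt
    · exact hj.isBigO_norm
  · exact (hj.hasGradientAt_comp hφ a hx).differentiableAt

theorem apply_eq_of_isHamiltonianTrajectory {φ : ℝ → ℝ} (hφ : Differentiable ℝ φ)
    (hφ0 : φ 0 = 0) (hφ'0 : deriv φ 0 = 0) (hφ'pos : ∀ t : ℝ, 0 < t → 0 < deriv φ t)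
    {a : ℝ} (ha : 0 < a) {x : ℝ → EuclideanSpace ℝ (Fin (2 * n))}
    (hx : IsHamiltonianTrajectory n (fun z => a * φ (j z)) x) (s t : ℝ) : j (x s) = j (x t) := by
  have hφmono : StrictMonoOn φ (Set.Ici 0) :=
    strictMonoOn_of_deriv_pos (convex_Ici 0) hφ.continuous.continuousOn (by simpa using hφ'pos)
  have henergy := hx.hamiltonian_eq (hj.differentiable_comp hφ hφ0 hφ'0 a) s t
  exact hφmono.injOn (hj.nonneg _) (hj.nonneg _) (mul_left_cancel₀ ha.ne' henergy)

end IsGauge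

section Rescaling

variable {n : ℕ} {j : EuclideanSpace ℝ (Fin (2 * n)) → ℝ} {φ : ℝ → ℝ} {a T τ ρ : ℝ}

namespace IsClosedCharacteristic

variable {y : ℝ → EuclideanSpace ℝ (Fin (2 * n))}

theorem ne_zero (hj : IsGauge n j) (hy : IsClosedCharacteristic n j τ y) (t : ℝ) : y t ≠ 0 :=
  hj.ne_zero_of_pos ((hy.2.2.1 t).symm ▸ one_pos)

theorem isHamiltonianTrajectory_rescale (hj : IsGauge n j) (hφ : Differentiable ℝ φ)
    (hy : IsClosedCharacteristic n j τ y) (hρ : 0 < ρ) (hρτ : a * deriv φ ρ = ρ * τ / T) :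
    IsHamiltonianTrajectory n (fun z => a * φ (j z)) (fun s => ρ • y (τ * s / T)) := by
  intro t
  have hjρy : j (ρ • y (τ * t / T)) = ρ := by rw [hj.1 ρ hρ, hy.2.2.1, mul_one]
  rw [hj.gradient_comp_of_eq hφ a hρ hjρy, hρτ, hj.gradient_smul hρ (hy.ne_zero hj _), Jmap_smul]
  exact (hy.2.1 _).const_smul_comp_mul_div

theorem rescale_periodic (hy : IsClosedCharacteristic n j τ y) (hT : T ≠ 0) (t : ℝ) :
    y (τ * (t + T) / T) = y (τ * t / T) := by
  rw [show τ * (t + T) / T = τ * t / T + τ by field_simp, hy.2.2.2]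

end IsClosedCharacteristic

theorem IsHamiltonianTrajectory.isClosedCharacteristic_rescale
    {x : ℝ → EuclideanSpace ℝ (Fin (2 * n))}
    (hx : IsHamiltonianTrajectory n (fun z => a * φ (j z)) x) (hj : IsGauge n j)
    (hφ : Differentiable ℝ φ) (hper : ∀ t, x (t + T) = x t) (hxρ : ∀ t, j (x t) = ρ)
    (hρ : 0 < ρ) (hτ : 0 < τ) (hT : 0 < T) (hρτ : a * deriv φ ρ = ρ * τ / T) :
    IsClosedCharacteristic n j τ (fun s => ρ⁻¹ • x (T * s / τ)) := by
  refine ⟨hτ, fun s => ?_, fun s => ?_, fun s => ?_⟩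
  · have hder := (hx (T * s / τ)).const_smul_comp_mul_div (c := ρ⁻¹)
    have hscalar : ρ⁻¹ * T / τ * (ρ * τ / T) = 1 := by field_simp
    rw [hj.gradient_comp_of_eq hφ a hρ (hxρ _), hρτ, Jmap_smul, smul_smul, hscalar,
      one_smul] at hder
    rwa [hj.gradient_smul (inv_pos.mpr hρ) (hj.ne_zero_of_pos ((hxρ _).symm ▸ hρ))]
  · rw [hj.1 _ (inv_pos.mpr hρ), hxρ, inv_mul_cancel₀ hρ.ne']
  · dsimp only
    rw [show T * (s + τ) / τ = T * s / τ + T by field_simp, hper]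

end Rescaling

theorem fixed_period_solutions_correspond_to_closed_characteristics_general
    (n : ℕ) (j : EuclideanSpace ℝ (Fin (2 * n)) → ℝ) (hj : IsGauge n j)
    (φ : ℝ → ℝ)
    (hφsmooth : ContDiff ℝ (⊤ : ℕ∞) φ)
    (hφ0 : φ 0 = 0) (hφ'0 : deriv φ 0 = 0)
    (hφ'pos : ∀ t : ℝ, 0 < t → 0 < deriv φ t)
    (hφanti : StrictAntiOn (fun t => deriv φ t / t) (Set.Ioi (0 : ℝ)))
    (hφlim : Filter.Tendsto (fun t => deriv φ t / t) (nhdsWithin 0 (Set.Ioi (0 : ℝ))) (nhds 1))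
    (a T : ℝ) (ha : 0 < a) (hT : 0 < T)
    (Ha : EuclideanSpace ℝ (Fin (2 * n)) → ℝ) (hHa : ∀ x, Ha x = a * φ (j x)) :
    -- (i) every closed characteristic of period `τ` yields a `T`-periodic solution
    (∀ (τ : ℝ) (y : ℝ → EuclideanSpace ℝ (Fin (2 * n))) (ρ : ℝ),
      IsClosedCharacteristic n j τ y → 0 < ρ → a * deriv φ ρ = ρ * τ / T →
      ((∀ t : ℝ, HasDerivAt (fun s => ρ • y (τ * s / T))
          (Jmap n (gradient Ha (ρ • y (τ * t / T)))) t) ∧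
       (∀ t : ℝ, ρ • y (τ * (t + T) / T) = ρ • y (τ * t / T))))
    ∧
    -- (ii) every nonconstant `T`-periodic solution arises this way
    (∀ x : ℝ → EuclideanSpace ℝ (Fin (2 * n)),
      (∀ t : ℝ, HasDerivAt x (Jmap n (gradient Ha (x t))) t) →
      (∀ t : ℝ, x (t + T) = x t) →
      (¬ ∃ c, ∀ t : ℝ, x t = c) →
      ∃ (τ : ℝ) (ρ : ℝ) (y : ℝ → EuclideanSpace ℝ (Fin (2 * n))),
        0 < τ ∧ τ < a * T ∧ 0 < ρ ∧ a * deriv φ ρ = ρ * τ / T ∧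
        IsClosedCharacteristic n j τ y ∧
        ∀ t : ℝ, x t = ρ • y (τ * t / T)) := by
  obtain rfl : Ha = fun z => a * φ (j z) := funext hHa
  have hφ : Differentiable ℝ φ := hφsmooth.differentiable (by simp)
  refine ⟨fun τ y ρ hy hρ hρτ => ⟨hy.isHamiltonianTrajectory_rescale hj hφ hρ hρτ,
    fun t => by rw [hy.rescale_periodic hT.ne']⟩, fun x (hx : IsHamiltonianTrajectory n _ x) hper hnonconst => ?_⟩
  obtain ⟨t₀, hx₀⟩ : ∃ t, x t ≠ 0 := by
    by_contra! hzero
    exact hnonconst ⟨0, hzero⟩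
  set ρ := j (x t₀)
  have hρ : 0 < ρ := hj.2.1 _ hx₀
  have hxρ (t : ℝ) : j (x t) = ρ :=
    hj.apply_eq_of_isHamiltonianTrajectory hφ hφ0 hφ'0 hφ'pos ha hx t t₀
  set τ := a * deriv φ ρ * T / ρ
  have hρτ : a * deriv φ ρ = ρ * τ / T := by simp only [τ]; field_simp
  have hτ : 0 < τ := by have := hφ'pos ρ hρ; positivity
  have hτa : τ < a * T := by
    rw [div_lt_iff₀ hρ]
    nlinarith [deriv_lt_self_of_strictAntiOn_div hφanti hφlim hρ, mul_pos ha hT]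
  refine ⟨τ, ρ, _, hτ, hτa, hρ, hρτ,
    hx.isClosedCharacteristic_rescale hj hφ hper hxρ hρ hτ hT hρτ, fun t => ?_⟩
  simp [smul_smul, hρ.ne', show T * (τ * t / T) / τ = t by field_simp]

/-- The nonconstant `T`-periodic solutions of `ẋ = J·∇H_a(x)`, `H_a = a·φ(j(·))`, are exactly
the reparametrized closed characteristics `x(t) = ρ·y(τ·t/T)` with `τ < a·T` and
`a·φ'(ρ) = ρ·τ/T`. -/
theorem fixed_period_solutions_correspond_to_closed_characteristics
    (n : ℕ) (j : EuclideanSpace ℝ (Fin (2 * n)) → ℝ) (hj : IsGauge n j)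
    (φ : ℝ → ℝ)
    (hφsmooth : ContDiff ℝ (⊤ : ℕ∞) φ)
    (hφnonneg : ∀ t : ℝ, 0 ≤ t → 0 ≤ φ t)
    (hφ0 : φ 0 = 0) (hφ'0 : deriv φ 0 = 0) (hφ''0 : deriv (deriv φ) 0 = 1)
    (hφ'pos : ∀ t : ℝ, 0 < t → 0 < deriv φ t)
    (hφanti : StrictAntiOn (fun t => deriv φ t / t) (Set.Ioi (0 : ℝ)))
    (hφlim : Filter.Tendsto (fun t => deriv φ t / t) (nhdsWithin 0 (Set.Ioi (0 : ℝ))) (nhds 1))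
    (a T : ℝ) (ha : 0 < a) (hT : 0 < T)
    (Ha : EuclideanSpace ℝ (Fin (2 * n)) → ℝ) (hHa : ∀ x, Ha x = a * φ (j x)) :
    -- (i) every closed characteristic of period `τ` yields a `T`-periodic solution
    (∀ (τ : ℝ) (y : ℝ → EuclideanSpace ℝ (Fin (2 * n))) (ρ : ℝ),
      IsClosedCharacteristic n j τ y → 0 < ρ → a * deriv φ ρ = ρ * τ / T →
      ((∀ t : ℝ, HasDerivAt (fun s => ρ • y (τ * s / T))
          (Jmap n (gradient Ha (ρ • y (τ * t / T)))) t) ∧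
       (∀ t : ℝ, ρ • y (τ * (t + T) / T) = ρ • y (τ * t / T))))
    ∧
    -- (ii) every nonconstant `T`-periodic solution arises this way
    (∀ x : ℝ → EuclideanSpace ℝ (Fin (2 * n)),
      (∀ t : ℝ, HasDerivAt x (Jmap n (gradient Ha (x t))) t) →
      (∀ t : ℝ, x (t + T) = x t) →
      (¬ ∃ c, ∀ t : ℝ, x t = c) →
      ∃ (τ : ℝ) (ρ : ℝ) (y : ℝ → EuclideanSpace ℝ (Fin (2 * n))),
        0 < τ ∧ τ < a * T ∧ 0 < ρ ∧ a * deriv φ ρ = ρ * τ / T ∧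
        IsClosedCharacteristic n j τ y ∧
        ∀ t : ℝ, x t = ρ • y (τ * t / T)) :=
  fixed_period_solutions_correspond_to_closed_characteristics_general n j hj φ hφsmooth hφ0 hφ'0
    hφ'pos hφanti hφlim a T ha hT Ha hHa
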